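/- arXiv:1603.06695 — 2 statements merged into one kernel-verified Lean document; each statement's English description precedes it below -/
import Mathlib

section
/- For all d ≥ 1, c ≥ 1 and r ≥ 1: AR^{d+1}_f(r + 65·(d+1) + 2·c + 3) ≥ AR^{d+1}_{id}(r), where f(i) = max{j : 2_d(j^c) ≤ i} (and f(i) = 0 if no such j exists) and id is the identity function. -/
/-!
Given an `id`-limited colouring `C` of `(d+1)`-tuples, colour a tuple `z` by `C (f ∘ z)` together
with gadget colours built from the Erdős–Hajnal–Rado stepping-up map `δ(a, b)`, the highest bit in
which `a` and `b` differ. Since `i < 2_d((f i + 1)^c)`, the `d`-fold iterate of `δ` along `z` is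
below `(f (max z) + 1)^c`, so it and its complement are recorded by `c` digits each in base
`f (max z) + 1`; the other gadgets record whether consecutive `f`-values, and consecutive values
of each lower iterate of `δ`, go up, stay or go down. For an adjacent pair `x₀ < ⋯ < x_{d+1}` of
the new colouring, either `f ∘ x` is strictly increasing and is an adjacent pair for `C`, or `f`
is constant along `x`; then the digits force the `d`-fold iterates at positions `0` and `1` to
agree, while the recorded comparison patterns make `δ` separate them at every level.
The numbers `AR` exist by the infinite Ramsey theorem and an ultrafilter compactness argument.
-/

/-- Tower function: `tower 0 i = i`, `tower (n+1) i = 2 ^ tower n i`. -/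
def tower : ℕ → ℕ → ℕ
  | 0, i => i
  | n+1, i => 2 ^ tower n i

/-- `ARProp f d r R` : every `f`-limited colouring `C : {0,…,R}^d → ℕ^r` admits
`x₁ < … < x_{d+1} ≤ R` with `C(x₁,…,x_d) ≤ C(x₂,…,x_{d+1})` coordinatewise. -/
def ARProp (f : ℕ → ℕ) (d r R : ℕ) : Prop :=
  ∀ C : (Fin d → ℕ) → (Fin r → ℕ),
    (∀ x : Fin d → ℕ, (∀ i, x i ≤ R) → ∀ j, C x j ≤ f (Finset.univ.sup x) + 1) →
    ∃ x : Fin (d+1) → ℕ, StrictMono x ∧ x (Fin.last d) ≤ R ∧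
      ∀ j, C (fun i => x i.castSucc) j ≤ C (fun i => x i.succ) j

/-- `ARnum f d r` : the least `R` witnessing the adjacent Ramsey theorem `AR_f^d(r)`. -/
noncomputable def ARnum (f : ℕ → ℕ) (d r : ℕ) : ℕ := sInf {R | ARProp f d r R}

theorem exists_infinite_subset_homogeneous {κ : Type*} [Finite κ] (k : ℕ)
    (g : (Fin k → ℕ) → κ) {S : Set ℕ} (hS : S.Infinite) :
    ∃ T ⊆ S, T.Infinite ∧
      ∃ c, ∀ t : Fin k → ℕ, StrictMono t → (∀ i, t i ∈ T) → g t = c := by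
  induction k generalizing S with
  | zero =>
    exact ⟨S, subset_rfl, hS, g Fin.elim0, fun t _ _ => congrArg g (Subsingleton.elim _ _)⟩
  | succ k ih =>
    -- Fix a first element `a`, shrink the set so that all tuples after `a` get one colour,
    -- repeat, and finally pigeonhole on the colours attached to the chosen first elements.
    have step : ∀ T : {T : Set ℕ // T.Infinite}, ∃ T' : {T : Set ℕ // T.Infinite}, ∃ a ∈ T.1,
        T'.1 ⊆ T.1 ∩ Set.Ioi a ∧
          ∃ c, ∀ t : Fin k → ℕ, StrictMono t → (∀ i, t i ∈ T'.1) → g (Fin.cons a t) = c := by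
      rintro ⟨T, hT⟩
      obtain ⟨a, ha⟩ := hT.nonempty
      have hT' : (T ∩ Set.Ioi a).Infinite := by
        simpa [Set.sdiff_eq] using hT.sdiff (Set.finite_Iic a)
      obtain ⟨T', hT'sub, hT'inf, c, hc⟩ := ih (fun t => g (Fin.cons a t)) hT'
      exact ⟨⟨T', hT'inf⟩, a, ha, hT'sub, c, hc⟩
    choose next a ha hsub col hcol using step
    set Ts : ℕ → {T : Set ℕ // T.Infinite} := fun n => next^[n] ⟨S, hS⟩
    have hTs_succ (n : ℕ) : Ts (n + 1) = next (Ts n) := Function.iterate_succ_apply' ..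
    have hTs_anti : Antitone fun n => (Ts n).1 := antitone_nat_of_succ_le fun n => by
      rw [hTs_succ]; exact (hsub _).trans Set.inter_subset_left
    set A : ℕ → ℕ := fun n => a (Ts n)
    have hA_mem {n m : ℕ} (h : n < m) : A m ∈ (next (Ts n)).1 := by
      rw [← hTs_succ]; exact hTs_anti h (ha _)
    have hA : StrictMono A := fun n m h => (hsub _ (hA_mem h)).2
    obtain ⟨c, hc⟩ := Finite.exists_infinite_fiber fun n => col (Ts n)
    refine ⟨A '' ((fun n => col (Ts n)) ⁻¹' {c}), ?_, ?_, c, ?_⟩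
    · rintro _ ⟨n, -, rfl⟩
      exact hTs_anti (Nat.zero_le n) (ha _)
    · exact (Set.infinite_coe_iff.1 hc).image hA.injective.injOn
    · intro t ht hT
      obtain ⟨n, hn, hn0⟩ := hT 0
      have htail (i : Fin k) : t i.succ ∈ (next (Ts n)).1 := by
        obtain ⟨m, -, hm⟩ := hT i.succ
        rw [← hm]
        exact hA_mem (hA.lt_iff_lt.1 (hn0.trans_lt (hm ▸ ht (Fin.succ_pos i))))
      rw [← Fin.cons_self_tail t, ← hn0, ← hn]
      exact hcol _ (Fin.tail t) (ht.comp (Fin.strictMono_succ)) htail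

theorem exists_strictMono_adjacent_le {n r : ℕ} (C : (Fin n → ℕ) → Fin r → ℕ) :
    ∃ x : Fin (n + 1) → ℕ, StrictMono x ∧
      ∀ j, C (fun i => x i.castSucc) j ≤ C (fun i => x i.succ) j := by
  obtain ⟨T, -, hT, c, hc⟩ := exists_infinite_subset_homogeneous (n + 1)
    (fun x j => decide (C (fun i => x i.castSucc) j ≤ C (fun i => x i.succ) j)) Set.infinite_univ
  set b := Nat.nth (· ∈ T)
  have hb : StrictMono b := Nat.nth_strictMono hT
  set window : ℕ → Fin (n + 1) → ℕ := fun m i => b (m + i)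
  have hwindow (m : ℕ) : StrictMono (window m) := fun i i' h => hb (by simpa using h)
  have hcol (m : ℕ) := hc (window m) (hwindow m) fun i => Nat.nth_mem_of_infinite hT _
  by_cases hall : ∀ j, c j = true
  · refine ⟨window 0, hwindow 0, fun j => ?_⟩
    simpa [hall j] using congrFun (hcol 0) j
  · exfalso
    push Not at hall
    obtain ⟨j, hj⟩ := hall
    obtain ⟨m, hm⟩ := WellFounded.not_rel_apply_succ (r := (· < ·))
      fun m => C (fun i => window m i.castSucc) j
    have hwin : (fun i : Fin n => window (m + 1) i.castSucc) = fun i => window m i.succ := by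
      funext i; simp [window, add_assoc, add_comm 1]
    have := congrFun (hcol m) j
    simp only [hj, decide_eq_false_iff_not, not_le] at this
    exact hm (hwin ▸ this)

open Filter

theorem Ultrafilter.exists_eventually_eq {α β : Type*} (U : Ultrafilter α) {φ : α → β}
    {s : Set β} (hs : s.Finite) (h : ∀ᶠ x in (U : Filter α), φ x ∈ s) :
    ∃ b, ∀ᶠ x in (U : Filter α), φ x = b := by
  obtain ⟨b, -, hb⟩ := Ultrafilter.eq_pure_of_finite_mem hs (U.mem_map.2 h)
  exact ⟨b, U.mem_map.1 (hb ▸ rfl : ({b} : Set β) ∈ U.map φ)⟩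

theorem exists_ARProp (f : ℕ → ℕ) (n r : ℕ) : ∃ R, ARProp f n r R := by
  by_contra! hbad
  simp only [ARProp, not_forall, not_exists, not_and, not_le] at hbad
  choose C hClim hCbad using hbad
  let U := hyperfilter ℕ
  have hge (m : ℕ) : ∀ᶠ R in (U : Filter ℕ), m ≤ R :=
    Nat.hyperfilter_le_atTop (eventually_ge_atTop m)
  have hlim (z : Fin n → ℕ) (j : Fin r) :
      ∃ v, ∀ᶠ R in (U : Filter ℕ), C R z j = v := by
    refine U.exists_eventually_eq (Set.finite_Iic (f (Finset.univ.sup z) + 1)) ?_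
    filter_upwards [hge (Finset.univ.sup z)] with R hR
    exact hClim R z (fun i => (Finset.le_sup (Finset.mem_univ i)).trans hR) j
  choose Clim hClim using hlim
  obtain ⟨x, hx, hxle⟩ := exists_strictMono_adjacent_le Clim
  obtain ⟨R, hR, hlow, hhigh⟩ := ((hge _).and <|
    (eventually_all.2 fun j => hClim _ j).and (eventually_all.2 fun j => hClim _ j)).exists
  obtain ⟨j, hj⟩ := hCbad R x hx hR
  exact (hxle j).not_gt (hlow j ▸ hhigh j ▸ hj)

theorem ARProp.exists_of_card_le {f : ℕ → ℕ} {n r R : ℕ} (H : ARProp f n r R) {κ : Type*}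
    [Fintype κ] (hκ : Fintype.card κ ≤ r) (G : (Fin n → ℕ) → κ → ℕ)
    (hG : ∀ z : Fin n → ℕ, (∀ i, z i ≤ R) → ∀ k, G z k ≤ f (Finset.univ.sup z) + 1) :
    ∃ x : Fin (n + 1) → ℕ, StrictMono x ∧ x (Fin.last n) ≤ R ∧
      ∀ k, G (fun i => x i.castSucc) k ≤ G (fun i => x i.succ) k := by
  let e : κ ↪ Fin r := (Fintype.equivFin κ).toEmbedding.trans (Fin.castLEEmb hκ)
  obtain ⟨x, hx, hxR, hle⟩ := H (fun z => Function.extend e (G z) 0) fun z hz j => by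
    by_cases hj : ∃ k, e k = j
    · obtain ⟨k, rfl⟩ := hj
      rw [e.injective.extend_apply]
      exact hG z hz k
    · simp [Function.extend_apply' _ _ _ hj]
  refine ⟨x, hx, hxR, fun k => ?_⟩
  simpa only [e.injective.extend_apply] using hle (e k)

theorem le_tower (n i : ℕ) : i ≤ tower n i := by
  induction n with
  | zero => rfl
  | succ n ih => exact ih.trans Nat.lt_two_pow_self.le

noncomputable def floorInv (g : ℕ → ℕ) (i : ℕ) : ℕ := sSup {j | g j ≤ i}

section floorInv

variable {g : ℕ → ℕ}

theorem floorInv_le (hg : ∀ j, j ≤ g j) (i : ℕ) : floorInv g i ≤ i :=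
  csSup_le' fun j hj => (hg j).trans hj

theorem bddAbove_setOf_le (hg : ∀ j, j ≤ g j) (i : ℕ) : BddAbove {j | g j ≤ i} :=
  ⟨i, fun j hj => (hg j).trans hj⟩

theorem floorInv_mono (hg : ∀ j, j ≤ g j) : Monotone (floorInv g) := fun _ i' h =>
  csSup_le_csSup' (bddAbove_setOf_le hg i') fun _ hj => le_trans hj h

theorem lt_floorInv_add_one (hg : ∀ j, j ≤ g j) (i : ℕ) : i < g (floorInv g i + 1) := by
  by_contra! h
  exact (le_csSup (bddAbove_setOf_le hg i) h).not_gt (Nat.lt_succ_self _)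

end floorInv

theorem Nat.testBit_log_two {x : ℕ} (hx : x ≠ 0) : x.testBit (Nat.log 2 x) = true := by
  have hdiv : x / 2 ^ Nat.log 2 x = 1 :=
    Nat.div_eq_of_lt_le (by simpa using Nat.pow_log_le_self 2 hx) 
      (by simpa [pow_succ, mul_comm] using Nat.lt_pow_succ_log_self one_lt_two x)
  simp [Nat.testBit, Nat.shiftRight_eq_div_pow, hdiv]

/-- The stepping-up map `δ(a, b)`, the highest bit in which `a` and `b` differ (`0` if `a = b`). -/
def msd (a b : ℕ) : ℕ := Nat.log 2 (a ^^^ b)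

theorem msd_comm (a b : ℕ) : msd a b = msd b a := by
  rw [msd, msd, Nat.xor_comm]

theorem testBit_msd_of_lt {a b : ℕ} (h : a < b) :
    a.testBit (msd a b) = false ∧ b.testBit (msd a b) = true := by
  have hx : a ^^^ b ≠ 0 := fun h0 => h.ne (xor_eq_zero_iff.1 h0)
  have hne : a.testBit (msd a b) ≠ b.testBit (msd a b) := by
    simpa [msd, Nat.testBit_xor] using Nat.testBit_log_two hx
  have hhigh (j : ℕ) (hj : msd a b < j) : b.testBit j = a.testBit j := by
    have := Nat.testBit_eq_false_of_lt ((Nat.lt_pow_succ_log_self one_lt_two _).trans_le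
      (Nat.pow_le_pow_right two_pos hj) : a ^^^ b < 2 ^ j)
    rw [Nat.testBit_xor] at this
    revert this
    cases a.testBit j <;> cases b.testBit j <;> simp
  cases ha : a.testBit (msd a b)
  · exact ⟨rfl, by simpa [ha] using hne.symm⟩
  · have hb : b.testBit (msd a b) = false := by simpa [ha] using hne.symm
    exact absurd (Nat.lt_of_testBit _ hb ha hhigh) h.not_gt

theorem msd_ne_msd_of_lt_of_lt {a b c : ℕ} (hab : a < b) (hbc : b < c) :
    msd a b ≠ msd b c := by
  -- `b` has bit `1` at `δ(a, b)` but bit `0` at `δ(b, c)`.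
  intro h
  have h1 := (testBit_msd_of_lt hab).2
  rw [h, (testBit_msd_of_lt hbc).1] at h1
  exact Bool.false_ne_true h1

theorem msd_ne_msd_of_compare_eq {a b c : ℕ} (hab : a ≠ b) (h : compare a b = compare b c) :
    msd a b ≠ msd b c := by
  rcases hab.lt_or_gt with hab | hab
  · exact msd_ne_msd_of_lt_of_lt hab (compare_lt_iff_lt.1 (h ▸ compare_lt_iff_lt.2 hab))
  · rw [msd_comm a b, msd_comm b c]
    exact (msd_ne_msd_of_lt_of_lt (compare_gt_iff_gt.1 (h ▸ compare_gt_iff_gt.2 hab)) hab).symm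

theorem msd_lt_of_lt_two_pow {a b t : ℕ} (ht : t ≠ 0) (ha : a < 2 ^ t) (hb : b < 2 ^ t) :
    msd a b < t :=
  Nat.log_lt_of_lt_pow' ht (Nat.xor_lt_two_pow ha hb)

def msdSeq (u : ℕ → ℕ) (i : ℕ) : ℕ := msd (u i) (u (i + 1))

theorem iterate_msdSeq_congr {u v : ℕ → ℕ} {s j : ℕ}
    (h : ∀ i, j ≤ i → i ≤ j + s → u i = v i) :
    msdSeq^[s] u j = msdSeq^[s] v j := by
  induction s generalizing u v with
  | zero => exact h j le_rfl le_rfl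
  | succ s ih =>
    simp only [Function.iterate_succ_apply]
    exact ih fun i hi hi' => by
      rw [msdSeq, msdSeq, h i hi (by omega), h (i + 1) (by omega) (by omega)]

theorem iterate_msdSeq_comp_succ (s : ℕ) (u : ℕ → ℕ) (j : ℕ) :
    msdSeq^[s] (fun i => u (i + 1)) j = msdSeq^[s] u (j + 1) :=
  congrFun ((show Function.Commute msdSeq (· ∘ Nat.succ) from fun _ => rfl).iterate_left s u) j

theorem iterate_msdSeq_lt_tower {u : ℕ → ℕ} {m n s j : ℕ} (hm : m ≠ 0)
    (hu : ∀ i, j ≤ i → i ≤ j + s → u i < tower (s + n) m) : msdSeq^[s] u j < tower n m := by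
  induction s generalizing u with
  | zero => simpa using hu j le_rfl le_rfl
  | succ s ih =>
    rw [Function.iterate_succ_apply]
    have htower : tower (s + 1 + n) m = 2 ^ tower (s + n) m := by rw [Nat.add_right_comm]; rfl
    refine ih fun i hi hi' => msd_lt_of_lt_two_pow ?_ (htower ▸ hu i hi (by omega))
      (htower ▸ hu (i + 1) (by omega) (by omega))
    exact ((Nat.pos_of_ne_zero hm).trans_le (le_tower _ _)).ne'

theorem iterate_msdSeq_zero_ne_one {X : ℕ → ℕ} (h01 : X 0 ≠ X 1) {s : ℕ}
    (h : ∀ t < s,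
      compare (msdSeq^[t] X 0) (msdSeq^[t] X 1) = compare (msdSeq^[t] X 1) (msdSeq^[t] X 2)) :
    msdSeq^[s] X 0 ≠ msdSeq^[s] X 1 := by
  induction s with
  | zero => exact h01
  | succ s ih =>
    simp only [Function.iterate_succ_apply']
    exact msd_ne_msd_of_compare_eq (ih fun t ht => h t (by omega)) (h s (by omega))

def digit (b i u : ℕ) : ℕ := u / b ^ i % b

theorem digit_lt {b : ℕ} (hb : b ≠ 0) (i u : ℕ) : digit b i u < b :=
  Nat.mod_lt _ (Nat.pos_of_ne_zero hb)

theorem le_of_forall_digit_le {b c u v : ℕ} (hu : u < b ^ c)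
    (h : ∀ i < c, digit b i u ≤ digit b i v) : u ≤ v := by
  induction c generalizing u v with
  | zero => simp_all
  | succ c ih =>
    have hdiv : u / b ≤ v / b := by
      refine ih (Nat.div_lt_of_lt_mul (by rwa [← pow_succ'])) fun i hi => ?_
      simpa [digit, Nat.div_div_eq_div_mul, pow_succ'] using h (i + 1) (by omega)
    have hmod : u % b ≤ v % b := by simpa [digit] using h 0 (by omega)
    calc u = b * (u / b) + u % b := (Nat.div_add_mod u b).symm
      _ ≤ b * (v / b) + v % b := by gcongr
      _ = v := Nat.div_add_mod v b

theorem compare_eq_compare_zero_one {α : Type*} [LinearOrder α] {w : ℕ → α} {n : ℕ}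
    (h : ∀ i < n, compare (w i) (w (i + 1)) = compare (w (i + 1)) (w (i + 2))) :
    ∀ i ≤ n, compare (w i) (w (i + 1)) = compare (w 0) (w 1)
  | 0, _ => rfl
  | i + 1, hi => (h i (by omega)).symm.trans (compare_eq_compare_zero_one h i (by omega))

def tupleSeq {n : ℕ} (z : Fin (n + 1) → ℕ) (i : ℕ) : ℕ := z ⟨min i n, by omega⟩

theorem tupleSeq_of_le {n : ℕ} (z : Fin (n + 1) → ℕ) {i : ℕ} (h : i ≤ n) :
    tupleSeq z i = z ⟨i, by omega⟩ := by
  simp [tupleSeq, h]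

theorem tupleSeq_val {n : ℕ} (z : Fin (n + 1) → ℕ) (i : Fin (n + 1)) : tupleSeq z i = z i :=
  tupleSeq_of_le z (Nat.lt_succ_iff.1 i.2)

theorem tupleSeq_last {n : ℕ} (z : Fin (n + 1) → ℕ) : tupleSeq z n = z (Fin.last n) :=
  tupleSeq_of_le z le_rfl

theorem tupleSeq_castSucc {n : ℕ} (x : Fin (n + 2) → ℕ) {i : ℕ} (h : i ≤ n) :
    tupleSeq (fun j => x j.castSucc) i = tupleSeq x i := by
  simp [tupleSeq_of_le _ h, tupleSeq_of_le x (h.trans n.le_succ)]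

theorem tupleSeq_succ {n : ℕ} (x : Fin (n + 2) → ℕ) {i : ℕ} (h : i ≤ n) :
    tupleSeq (fun j => x j.succ) i = tupleSeq x (i + 1) := by
  simp [tupleSeq_of_le _ h, tupleSeq_of_le x (Nat.succ_le_succ h)]

theorem Monotone.tupleSeq {n : ℕ} {z : Fin (n + 1) → ℕ} (hz : Monotone z) :
    Monotone (tupleSeq z) :=
  fun _ _ h => hz (Fin.mk_le_mk.2 (min_le_min_right n h))

section StepUp

variable {F : ℕ → ℕ} {d c r : ℕ}

def stepUpType (F u : ℕ → ℕ) (i : ℕ) : Ordering × Ordering :=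
  (compare (F (u i)) (F (u (i + 1))), compare (msdSeq^[i] u 0) (msdSeq^[i] u 1))

/-- One-hot indicators and digit pairs turn the coordinatewise `≤` of an adjacent pair into
equality of the recorded data, while every colour stays at most `F (u d) + 1`. -/
def stepUpColouring (F : ℕ → ℕ) (d c r : ℕ) (C : (Fin (d + 1) → ℕ) → Fin r → ℕ)
    (u : ℕ → ℕ) :
    Fin r ⊕ (Fin d × Ordering × Ordering) ⊕ Fin c ⊕ Fin c → ℕ
  | .inl j => C (fun i => F (u i)) j
  | .inr (.inl (i, o)) => if stepUpType F u i = o then 1 else 0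
  | .inr (.inr (.inl i)) => digit (F (u d) + 1) i (msdSeq^[d] u 0)
  | .inr (.inr (.inr i)) => digit (F (u d) + 1) i ((F (u d) + 1) ^ c - 1 - msdSeq^[d] u 0)

theorem stepUpColouring_congr {C : (Fin (d + 1) → ℕ) → Fin r → ℕ} {u v : ℕ → ℕ}
    (h : ∀ i ≤ d, u i = v i) : stepUpColouring F d c r C u = stepUpColouring F d c r C v := by
  have hseq (s j : ℕ) (hs : j + s ≤ d) : msdSeq^[s] u j = msdSeq^[s] v j :=
    iterate_msdSeq_congr fun i _ hi => h i (by omega)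
  funext k
  rcases k with j | ⟨i, o⟩ | i | i
  · simp only [stepUpColouring, h _ (Nat.lt_succ_iff.1 (Fin.is_lt _))]
  · have htype : stepUpType F u i = stepUpType F v i := by
      simp only [stepUpType, h i i.2.le, h (i + 1) i.2, hseq i 0 (by omega), hseq i 1 (by omega)]
    simp only [stepUpColouring, htype]
  all_goals simp only [stepUpColouring, h d le_rfl, hseq d 0 (by omega)]

theorem stepUpColouring_tupleSeq_le (hF : Monotone F) (hF_le : ∀ i, F i ≤ i) {R : ℕ}
    {C : (Fin (d + 1) → ℕ) → Fin r → ℕ}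
    (hC : ∀ x : Fin (d + 1) → ℕ, (∀ i, x i ≤ R) → ∀ j, C x j ≤ id (Finset.univ.sup x) + 1)
    {z : Fin (d + 1) → ℕ} (hz : ∀ i, z i ≤ R) (k) :
    stepUpColouring F d c r C (tupleSeq z) k ≤ F (Finset.univ.sup z) + 1 := by
  have hsup {i : Fin (d + 1)} : F (z i) ≤ F (Finset.univ.sup z) :=
    hF (Finset.le_sup (Finset.mem_univ i))
  have hdigit (i u : ℕ) : digit (F (tupleSeq z d) + 1) i u ≤ F (Finset.univ.sup z) + 1 := by
    have := digit_lt (F (tupleSeq z d)).succ_ne_zero i u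
    rw [tupleSeq_last] at this ⊢
    exact this.le.trans (by simpa using hsup)
  rcases k with j | ⟨i, o⟩ | i | i
  · simp only [stepUpColouring, tupleSeq_val]
    exact (hC _ (fun i => (hF_le _).trans (hz i)) j).trans
      (Nat.add_le_add_right (Finset.sup_le fun i _ => hsup) 1)
  · simp only [stepUpColouring]
    split <;> omega
  · exact hdigit _ _
  · exact hdigit _ _

theorem stepUpType_eq_of_stepUpColouring_le {C : (Fin (d + 1) → ℕ) → Fin r → ℕ}
    {u v : ℕ → ℕ} (h : ∀ k, stepUpColouring F d c r C u k ≤ stepUpColouring F d c r C v k)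
    {i : ℕ} (hi : i < d) :
    stepUpType F u i = stepUpType F v i := by
  have := h (.inr (.inl (⟨i, hi⟩, stepUpType F u i)))
  simp only [stepUpColouring, if_true] at this
  split_ifs at this with hv
  exacts [hv.symm, absurd this (by omega)]

theorem iterate_msdSeq_eq_of_stepUpColouring_le {C : (Fin (d + 1) → ℕ) → Fin r → ℕ}
    {u v : ℕ → ℕ} (hd : F (u d) = F (v d)) (hu : msdSeq^[d] u 0 < (F (u d) + 1) ^ c)
    (hv : msdSeq^[d] v 0 < (F (u d) + 1) ^ c)
    (h : ∀ k, stepUpColouring F d c r C u k ≤ stepUpColouring F d c r C v k) :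
    msdSeq^[d] u 0 = msdSeq^[d] v 0 := by
  have hle : msdSeq^[d] u 0 ≤ msdSeq^[d] v 0 := le_of_forall_digit_le hu fun i hi => by
    simpa [stepUpColouring, hd] using h (.inr (.inr (.inl ⟨i, hi⟩)))
  have hle' : (F (u d) + 1) ^ c - 1 - msdSeq^[d] u 0 ≤ (F (u d) + 1) ^ c - 1 - msdSeq^[d] v 0 :=
    le_of_forall_digit_le (b := F (u d) + 1) (c := c) (by omega) fun i hi => by
      simpa [stepUpColouring, hd] using h (.inr (.inr (.inr ⟨i, hi⟩)))
  omega

theorem apply_ne_of_stepUpColouring_le (hF_tower : ∀ i, i < tower d ((F i + 1) ^ c))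
    {C : (Fin (d + 1) → ℕ) → Fin r → ℕ} {X : ℕ → ℕ} (hX : Monotone X) (h01 : X 0 ≠ X 1)
    (htype : ∀ {i}, i < d → stepUpType F X i = stepUpType F (fun i => X (i + 1)) i)
    (h : ∀ k, stepUpColouring F d c r C X k ≤ stepUpColouring F d c r C (fun i => X (i + 1)) k) :
    F (X d) ≠ F (X (d + 1)) := by
  intro hflat
  have hbound (j) (hj : j ≤ 1) : msdSeq^[d] X j < (F (X d) + 1) ^ c :=
    iterate_msdSeq_lt_tower (n := 0) (by positivity) fun i _ hi =>
      (hX (by omega : i ≤ d + 1)).trans_lt (hflat ▸ hF_tower (X (d + 1)))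
  have heq : msdSeq^[d] X 0 = msdSeq^[d] X 1 := by
    have := iterate_msdSeq_eq_of_stepUpColouring_le hflat (hbound 0 (by omega))
      (by simpa only [iterate_msdSeq_comp_succ] using hbound 1 le_rfl) h
    rwa [iterate_msdSeq_comp_succ] at this
  refine iterate_msdSeq_zero_ne_one h01 (fun t ht => ?_) heq
  simpa only [stepUpType, iterate_msdSeq_comp_succ] using congrArg Prod.snd (htype ht)

theorem ARProp.id_of_lt_tower {r' R : ℕ} (hF : Monotone F) (hF_le : ∀ i, F i ≤ i)
    (hF_tower : ∀ i, i < tower d ((F i + 1) ^ c)) (hr' : r + 9 * d + 2 * c ≤ r')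
    (H : ARProp F (d + 1) r' R) : ARProp id (d + 1) r R := by
  intro C hC
  have hcard : Fintype.card (Fin r ⊕ (Fin d × Ordering × Ordering) ⊕ Fin c ⊕ Fin c) ≤ r' := by
    simp only [Fintype.card_sum, Fintype.card_prod, Fintype.card_fin,
      show Fintype.card Ordering = 3 from rfl]
    omega
  obtain ⟨x, hx, hxR, hle⟩ := H.exists_of_card_le hcard
    (fun z => stepUpColouring F d c r C (tupleSeq z))
    fun z hz => stepUpColouring_tupleSeq_le hF hF_le hC hz
  set X := tupleSeq x with hXdef
  have hX : Monotone X := hx.monotone.tupleSeq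
  have hle' (k) :
      stepUpColouring F d c r C X k ≤ stepUpColouring F d c r C (fun i => X (i + 1)) k := by
    simpa only [stepUpColouring_congr fun i hi => tupleSeq_castSucc x hi,
      stepUpColouring_congr fun i hi => tupleSeq_succ x hi] using hle k
  have htype {i} (hi : i < d) := stepUpType_eq_of_stepUpColouring_le hle' hi
  have hcmp := compare_eq_compare_zero_one fun i hi => congrArg Prod.fst (htype hi)
  rcases hcase : compare (F (X 0)) (F (X 1))
  · refine ⟨fun i => F (x i), Fin.strictMono_iff_lt_succ.2 fun i => ?_, (hF_le _).trans hxR,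
      fun j => by simpa [stepUpColouring, tupleSeq_val] using hle (.inl j)⟩
    have := compare_lt_iff_lt.1 ((hcmp i i.is_le).trans hcase)
    rwa [hXdef, tupleSeq_of_le x (by omega), tupleSeq_of_le x (by omega)] at this
  · exact absurd (compare_eq_iff_eq.1 ((hcmp d le_rfl).trans hcase))
      (apply_ne_of_stepUpColouring_le hF_tower hX (hx.lt_iff_lt.2 zero_lt_one).ne htype hle')
  · exact absurd (compare_gt_iff_gt.1 hcase) (hF (hX zero_le_one)).not_gt

end StepUp

theorem AR_parametrised_lower_bound_general (d c r : ℕ) (hc : 1 ≤ c) :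
    ARnum id (d+1) r ≤
      ARnum (fun i => sSup {j | tower d (j^c) ≤ i}) (d+1) (r + 65*(d+1) + 2*c + 3) := by
  have hg (j : ℕ) : j ≤ tower d (j ^ c) := (Nat.le_self_pow (by omega) j).trans (le_tower d _)
  let F := floorInv fun j => tower d (j ^ c)
  have hR : ARProp F (d + 1) _ (ARnum F (d + 1) (r + 65*(d+1) + 2*c + 3)) :=
    Nat.sInf_mem (exists_ARProp F _ _)
  exact Nat.sInf_le <| hR.id_of_lt_tower (floorInv_mono hg) (floorInv_le hg)
    (lt_floorInv_add_one hg) (by omega)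

/-- Lower bound for the parametrised adjacent Ramsey function:
`AR^{d+1}_{c√(log^d)}(r + 65·(d+1) + 2·c + 3) ≥ AR^{d+1}_id(r)`. -/
theorem AR_parametrised_lower_bound (d c r : ℕ) (hd : 1 ≤ d) (hc : 1 ≤ c) (hr : 1 ≤ r) :
    ARnum id (d+1) r ≤
      ARnum (fun i => sSup {j | tower d (j^c) ≤ i}) (d+1) (r + 65*(d+1) + 2*c + 3) :=
  AR_parametrised_lower_bound_general d c r hc
end

section
/- For every d ≥ 1 there exists a constant a ≥ 1 such that for every c ≥ 1 there exists N such that for all m ≥ N and all r ≥ 2: PH^{d+1}_f(2_d(a·c·m), r·(d+2)^2·2^{(c+2)·a}) ≥ PH^{d+1}_{id}(m,r), where f(i) = max{j : 2_d(j·c) ≤ i} (and f(i) = 0 if no such j exists) and id is the identity function. -/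
/-- `PHProp f d m r R` : every colouring of the `d`-element subsets of `{m,…,R}` with
`r` colours admits a homogeneous `H ⊆ {m,…,R}` with `|H| ≥ f(min H)`. -/
def PHProp (f : ℕ → ℕ) (d m r R : ℕ) : Prop :=
  ∀ C : Finset ℕ → ℕ,
    (∀ s ⊆ Finset.Icc m R, s.card = d → C s < r) →
    ∃ H : Finset ℕ, H ⊆ Finset.Icc m R ∧ H.Nonempty ∧ f (sInf (H : Set ℕ)) ≤ H.card ∧
      ∀ s ⊆ H, ∀ t ⊆ H, s.card = d → t.card = d → C s = C t

/-- `PHnum f d m r` : the least `R` witnessing the Paris–Harrington theorem `PH_f^d(m,r)`. -/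
noncomputable def PHnum (f : ℕ → ℕ) (d m r : ℕ) : ℕ := sInf {R | PHProp f d m r R}

/-!
Paris–Harrington numbers exist by compactness: an ultrafilter limit of colourings of `{m, …, R}`
without large homogeneous sets, as `R → ∞`, is a colouring of `[m, ∞)`; an infinite homogeneous
set for it (infinite Ramsey theorem) contains a finite large one, on which some of the finite
colourings agree with the limit.

For the lower bound write `f = invTower d c` and `ψ x = f x / a`, which maps
`{2_d(a c m), …, R}` into `{m, …, R}`. Given a colouring `C` of the `(d+1)`-subsets of
`{m, …, R}`, colour a `(d+1)`-set `s` by the number of values of `ψ` on `s`, by `C (ψ s)` and by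
`Φ_w s` with `w = max ψ(s)`, where `Φ_w` colours the `(d+1)`-subsets of the range
`[0, 2_d((a w + a) c))` of the fibre `ψ⁻¹(w)` without homogeneous sets of size about `a w`
(Erdős's random colouring of pairs followed by `d - 1` Erdős–Hajnal stepping-up steps).
Let `H` be homogeneous with `|H| ≥ f(min H) ≥ a m > d²`. All `(d+1)`-subsets of `H` take equally
many values of `ψ`, which forces `ψ` to be injective or constant on `H`. If it is constant, `H`
lies in a single fibre and is homogeneous for `Φ_w`, which is impossible. So `ψ` is injective on
`H` and `ψ(H)` is homogeneous for `C` with `|ψ(H)| = |H| ≥ f(min H) ≥ min ψ(H)`.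
-/

open Finset

/-! ### Homogeneous sets -/

def IsHomogeneous {α β : Type*} (C : Finset α → β) (k : ℕ) (H : Finset α) : Prop :=
  ∀ s ⊆ H, ∀ t ⊆ H, #s = k → #t = k → C s = C t

namespace IsHomogeneous

variable {α β γ : Type*} {k : ℕ}

theorem of_add_mul {C₁ C₂ : Finset α → ℕ} {b : ℕ} {H : Finset α}
    (hC₁ : ∀ s ⊆ H, #s = k → C₁ s < b) (h : IsHomogeneous (fun s => C₁ s + b * C₂ s) k H) :
    IsHomogeneous C₁ k H ∧ IsHomogeneous C₂ k H := by
  refine ⟨fun s hs t ht hsk htk => ?_, fun s hs t ht hsk htk => ?_⟩ <;>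
    have hst := h s hs t ht hsk htk <;> have h₁ := hC₁ s hs hsk <;> have h₂ := hC₁ t ht htk
  · simpa [Nat.add_mul_mod_self_left, Nat.mod_eq_of_lt h₁, Nat.mod_eq_of_lt h₂]
      using congrArg (· % b) hst
  · simpa [Nat.add_mul_div_left _ _ (h₁.trans_le' (Nat.zero_le _)), Nat.div_eq_of_lt h₁,
      Nat.div_eq_of_lt h₂] using congrArg (· / b) hst

theorem of_forall_exists_eq {C : Finset γ → β} {g : Finset α → Finset γ} {k' : ℕ} {S : Finset α}
    {V : Finset γ} (h : IsHomogeneous (fun X => C (g X)) k' S)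
    (hV : ∀ t ⊆ V, #t = k → ∃ X ⊆ S, #X = k' ∧ g X = t) : IsHomogeneous C k V := by
  intro t ht t' ht' htk ht'k
  obtain ⟨X, hXS, hXk, rfl⟩ := hV t ht htk
  obtain ⟨X', hX'S, hX'k, rfl⟩ := hV t' ht' ht'k
  exact h X hXS X' hX'S hXk hX'k

theorem congr {C C' : Finset α → β} {H : Finset α} (h : IsHomogeneous C k H)
    (hCC' : ∀ s ⊆ H, #s = k → C s = C' s) : IsHomogeneous C' k H :=
  fun s hs t ht hsk htk => (hCC' s hs hsk).symm.trans ((h s hs t ht hsk htk).trans (hCC' t ht htk))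

theorem image [DecidableEq γ] {C : Finset γ → β} {f : α → γ} {H : Finset α}
    (hf : Set.InjOn f H) (h : IsHomogeneous (fun s => C (s.image f)) k H) :
    IsHomogeneous C k (H.image f) :=
  h.of_forall_exists_eq fun t ht htk => by
    obtain ⟨s, hsH, rfl⟩ := subset_image_iff.1 ht
    exact ⟨s, hsH, by rwa [card_image_of_injOn (hf.mono hsH)] at htk, rfl⟩

end IsHomogeneous

theorem Finset.injOn_or_forall_eq_of_isHomogeneous_card_image {α β : Type*} [DecidableEq β]
    {f : α → β} {H : Finset α} {d : ℕ} (hd : 1 ≤ d) (hH : d * d < #H)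
    (h : IsHomogeneous (fun s => #(s.image f)) (d + 1) H) :
    Set.InjOn f H ∨ ∀ x ∈ H, ∀ y ∈ H, f x = f y := by
  classical
  have hdH : d + 1 ≤ #H := by nlinarith
  have hpair {x y : α} (hx : x ∈ H) (hy : y ∈ H) : ∃ s ⊆ H, #s = d + 1 ∧ x ∈ s ∧ y ∈ s := by
    obtain ⟨s, hxys, hsH, hs⟩ := exists_subsuperset_card_eq
      (insert_subset hx (singleton_subset_iff.2 hy)) (card_le_two.trans (by omega)) hdH
    exact ⟨s, hsH, hs, hxys (mem_insert_self _ _), hxys (mem_insert_of_mem (mem_singleton_self _))⟩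
  obtain ⟨s₀, hs₀H, hs₀⟩ := exists_subset_card_eq hdH
  have hs₀_image : #(s₀.image f) = d + 1 ∨ #(s₀.image f) = 1 := by
    rcases le_or_gt (d + 1) #(H.image f) with hbig | hsmall
    · obtain ⟨T, hTH, hT⟩ := exists_subset_card_eq hbig
      obtain ⟨s, hsH, hsinj, rfl⟩ := exists_subset_injOn_image_eq_of_surjOn (f := f) ↑H T
        fun y hy => by simpa using hTH hy
      have hs : #s = d + 1 := (card_image_of_injOn hsinj).symm.trans hT
      exact .inl ((h s₀ hs₀H s hsH hs₀ hs).trans hT)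
    · obtain ⟨y, -, hy⟩ := exists_lt_card_fiber_of_mul_lt_card_of_maps_to
        (fun x hx => mem_image_of_mem f hx) (hH.trans_le' (Nat.mul_le_mul_right d (by omega)))
      obtain ⟨s, hs, hsd⟩ := exists_subset_card_eq (Nat.succ_le_of_lt hy)
      refine .inr ((h s₀ hs₀H s (hs.trans (filter_subset _ _)) hs₀ hsd).trans ?_)
      refine le_antisymm (card_le_one.2 fun a ha b hb => ?_)
        (card_pos.2 ((card_pos.1 (by omega)).image f))
      obtain ⟨x, hx, rfl⟩ := mem_image.1 ha
      obtain ⟨x', hx', rfl⟩ := mem_image.1 hb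
      rw [(mem_filter.1 (hs hx)).2, (mem_filter.1 (hs hx')).2]
  rcases hs₀_image with hinj | hconst
  · refine .inl fun x hx y hy hxy => ?_
    obtain ⟨s, hsH, hs, hxs, hys⟩ := hpair hx hy
    have : #(s.image f) = #s := ((h s hsH s₀ hs₀H hs hs₀).trans hinj).trans hs.symm
    exact card_image_iff.1 this hxs hys hxy
  · refine .inr fun x hx y hy => ?_
    obtain ⟨s, hsH, hs, hxs, hys⟩ := hpair hx hy
    exact card_le_one.1 ((h s hsH s₀ hs₀H hs hs₀).trans hconst).le _
      (mem_image_of_mem f hxs) _ (mem_image_of_mem f hys)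

/-! ### Existence of Paris–Harrington numbers -/

theorem Ultrafilter.exists_eventually_eq_of_eventually_lt (U : Ultrafilter ℕ) {g : ℕ → ℕ} {r : ℕ}
    (h : ∀ᶠ R in U, g R < r) : ∃ v < r, ∀ᶠ R in U, g R = v := by
  obtain ⟨v, hv, hU⟩ := (U.map g).eq_pure_of_finite_mem (Set.finite_Iio r) h
  exact ⟨v, hv, show {v} ∈ U.map g by rw [hU]; exact rfl⟩

theorem Set.Infinite.exists_strictMono_of_refine {X : Set ℕ} (hX : X.Infinite)
    (Q : ℕ → Set ℕ → Prop)
    (hrefine : ∀ Z ⊆ X, Z.Infinite → ∃ Z' ⊆ Z ∩ Set.Ioi (sInf Z), Z'.Infinite ∧ Q (sInf Z) Z') :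
    ∃ a : ℕ → ℕ, StrictMono a ∧ (∀ n, a n ∈ X) ∧
      ∀ n, ∃ Z', Q (a n) Z' ∧ ∀ j, n < j → a j ∈ Z' := by
  choose W hWsub hWinf hWQ using hrefine
  let next : {Z : Set ℕ // Z ⊆ X ∧ Z.Infinite} → {Z : Set ℕ // Z ⊆ X ∧ Z.Infinite} :=
    fun Z => ⟨W Z.1 Z.2.1 Z.2.2, fun x hx => Z.2.1 (hWsub _ _ _ hx).1, hWinf _ _ _⟩
  let Zs : ℕ → {Z : Set ℕ // Z ⊆ X ∧ Z.Infinite} := fun n => next^[n] ⟨X, subset_rfl, hX⟩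
  have hZs_succ (n : ℕ) : Zs (n + 1) = next (Zs n) := Function.iterate_succ_apply' _ _ _
  have hsub (n : ℕ) : (Zs (n + 1)).1 ⊆ (Zs n).1 ∩ Set.Ioi (sInf (Zs n).1) := by
    rw [hZs_succ]; exact hWsub _ _ _
  have hanti : Antitone fun n => (Zs n).1 :=
    antitone_nat_of_succ_le fun n => (hsub n).trans Set.inter_subset_left
  have hmem (n : ℕ) : sInf (Zs n).1 ∈ (Zs n).1 := Nat.sInf_mem (Zs n).2.2.nonempty
  refine ⟨fun n => sInf (Zs n).1, strictMono_nat_of_lt_succ fun n => (hsub n (hmem _)).2,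
    fun n => (Zs n).2.1 (hmem n), fun n => ⟨(Zs (n + 1)).1, ?_, fun j hj => hanti hj (hmem j)⟩⟩
  rw [hZs_succ]; exact hWQ _ _ _

theorem exists_infinite_homogeneous (k : ℕ) {r : ℕ} {C : Finset ℕ → ℕ} {X : Set ℕ}
    (hX : X.Infinite) (hC : ∀ s : Finset ℕ, ↑s ⊆ X → #s = k → C s < r) :
    ∃ Y ⊆ X, Y.Infinite ∧ ∃ v < r, ∀ s : Finset ℕ, ↑s ⊆ Y → #s = k → C s = v := by
  induction k generalizing C X with
  | zero => exact ⟨X, subset_rfl, hX, C ∅, hC ∅ (by simp) rfl, fun s _ hs => by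
      rw [card_eq_zero.1 hs]⟩
  | succ k ih =>
    obtain ⟨a, ha_mono, haX, hQ⟩ := hX.exists_strictMono_of_refine
      (fun x Z' => ∃ v < r, ∀ s : Finset ℕ, ↑s ⊆ Z' → #s = k → C (insert x s) = v)
      fun Z hZX hZ => by
        refine ih ((hZ.sdiff (Set.finite_Iic (sInf Z))).mono fun x hx =>
            ⟨hx.1, not_le.1 (Set.mem_Iic.not.1 hx.2)⟩) fun s hs hsk => hC _ ?_ ?_
        · rw [coe_insert, Set.insert_subset_iff]
          exact ⟨hZX (Nat.sInf_mem hZ.nonempty), fun x hx => hZX (hs hx).1⟩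
        · rw [card_insert_of_notMem fun h => (Set.mem_Ioi.1 (hs h).2).false, hsk]
    choose Z hvZ hZ using hQ
    choose v hvr hv using hvZ
    obtain ⟨w, hfib⟩ := Finite.exists_infinite_fiber fun n => (⟨v n, hvr n⟩ : Fin r)
    have hw : {n | v n = w}.Infinite := by
      rw [← Set.infinite_coe_iff]; convert hfib using 2; ext n; simp [Fin.ext_iff]
    refine ⟨a '' {n | v n = w}, by grind, hw.image ha_mono.injective.injOn, w, w.2, ?_⟩
    intro s hs hsk
    have hne : s.Nonempty := card_pos.1 (by omega)
    obtain ⟨n, hn, hna⟩ := hs (s.min'_mem hne)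
    have hmin : a n ∈ s := hna ▸ s.min'_mem hne
    have hle : ∀ x ∈ s, a n ≤ x := hna ▸ fun x hx => s.min'_le x hx
    rw [← insert_erase hmin, ← hn]
    refine hv n _ (fun x hx => ?_) (by rw [card_erase_of_mem hmin, hsk]; rfl)
    obtain ⟨j, -, rfl⟩ := hs (mem_of_mem_erase hx)
    exact hZ n j (ha_mono.lt_iff_lt.1
      (lt_of_le_of_ne (hle _ (mem_of_mem_erase hx)) (ne_of_mem_erase hx).symm))

theorem Set.Infinite.exists_finset_le_card (f : ℕ → ℕ) {Y : Set ℕ} (hY : Y.Infinite) :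
    ∃ H : Finset ℕ, ↑H ⊆ Y ∧ H.Nonempty ∧ f (sInf (H : Set ℕ)) ≤ #H := by
  have hx := Nat.sInf_mem hY.nonempty
  obtain ⟨t, htY, ht⟩ := hY.exists_subset_card_eq (f (sInf Y))
  have hHY : ↑(insert (sInf Y) t) ⊆ Y := by rw [coe_insert]; exact Set.insert_subset hx htY
  have hmin : sInf (↑(insert (sInf Y) t) : Set ℕ) = sInf Y :=
    le_antisymm (Nat.sInf_le (by simp))
      (le_csInf ⟨sInf Y, by simp⟩ fun b hb => Nat.sInf_le (hHY hb))
  refine ⟨insert (sInf Y) t, hHY, Finset.insert_nonempty _ _, ?_⟩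
  rw [hmin, ← ht]
  exact Finset.card_le_card (Finset.subset_insert _ _)

theorem exists_PHProp (f : ℕ → ℕ) (k m r : ℕ) : ∃ R, PHProp f k m r R := by
  by_contra! h
  simp only [PHProp, not_forall, not_exists, not_and] at h
  choose Cf hCf_lt hCf_bad using h
  let U := Filter.hyperfilter ℕ
  have hlim (s : Finset ℕ) (hs : ↑s ⊆ Set.Ici m) (hsk : #s = k) :
      ∃ v < r, ∀ᶠ R in U, Cf R s = v := by
    refine U.exists_eventually_eq_of_eventually_lt ?_
    filter_upwards [Nat.hyperfilter_le_atTop (Filter.eventually_ge_atTop (s.sup id))] with R hR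
    exact hCf_lt R s (fun x hx => mem_Icc.2 ⟨hs hx, (le_sup (f := id) hx).trans hR⟩) hsk
  choose! C hC_lt hC_lim using hlim
  obtain ⟨Y, hYm, hY, v, -, hCv⟩ := exists_infinite_homogeneous k (Set.Ici_infinite m) hC_lt
  obtain ⟨H, hHY, hHne, hHlarge⟩ := hY.exists_finset_le_card f
  have hgood : ∀ᶠ R in U, H.sup id ≤ R ∧ ∀ s ∈ H.powerset, #s = k → Cf R s = C s := by
    refine Filter.Eventually.and (Nat.hyperfilter_le_atTop (Filter.eventually_ge_atTop _))
      (Filter.eventually_all_finset _ |>.2 fun s hs => ?_)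
    by_cases hsk : #s = k
    · filter_upwards [hC_lim s (fun x hx => hYm (hHY (mem_powerset.1 hs hx))) hsk] with R hR
      exact fun _ => hR
    · exact Filter.Eventually.of_forall fun R h => absurd h hsk
  obtain ⟨R, hRH, hRC⟩ := hgood.exists
  obtain ⟨s, hs, t, ht, hsk, htk, hst⟩ := hCf_bad R H
    (fun x hx => mem_Icc.2 ⟨hYm (hHY hx), (le_sup (f := id) hx).trans hRH⟩) hHne hHlarge
  refine hst ?_
  rw [hRC s (mem_powerset.2 hs) hsk, hRC t (mem_powerset.2 ht) htk,
    hCv s (fun x hx => hHY (hs hx)) hsk, hCv t (fun x hx => hHY (ht hx)) htk]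

theorem PHnum_le_PHnum {f g : ℕ → ℕ} {d m r d' m' r' : ℕ} (hg : ∃ R, PHProp g d' m' r' R)
    (h : ∀ R, PHProp g d' m' r' R → PHProp f d m r R) : PHnum f d m r ≤ PHnum g d' m' r' :=
  Nat.sInf_le (h _ (Nat.sInf_mem hg))

/-! ### Colourings without large homogeneous sets -/

theorem card_mul_pow_le_of_forall_constOn {ι β : Type*} [Fintype ι] [Fintype β] {T : Finset ι}
    {B : Finset (ι → β)} (hB : ∀ ω ∈ B, ∃ v, ∀ i ∈ T, ω i = v) :
    #B * Fintype.card β ^ #T ≤ Fintype.card β ^ (Fintype.card ι + 1) := by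
  classical
  let G : β × ({i // i ∈ Tᶜ} → β) → ι → β := fun p i => if h : i ∈ Tᶜ then p.2 ⟨i, h⟩ else p.1
  have hsub : B ⊆ univ.image G := by
    intro ω hω
    obtain ⟨v, hv⟩ := hB ω hω
    refine mem_image.2 ⟨(v, fun i => ω i), mem_univ _, funext fun i => ?_⟩
    by_cases hi : i ∈ T
    · simp [G, hi, hv i hi]
    · simp [G, hi]
  calc _ ≤ #(univ.image G) * Fintype.card β ^ #T := Nat.mul_le_mul_right _ (card_le_card hsub)
    _ ≤ Fintype.card β * Fintype.card β ^ #Tᶜ * Fintype.card β ^ #T := by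
      refine Nat.mul_le_mul_right _ (card_image_le.trans_eq ?_)
      simp [card_compl]
    _ = _ := by rw [← card_compl_add_card T]; ring

theorem exists_forall_exists_ne {ι κ β : Type*} [Fintype ι] [DecidableEq ι] [Fintype β]
    [DecidableEq β] [Nonempty β] {A : Finset κ} {T : κ → Finset ι} {n : ℕ}
    (hT : ∀ a ∈ A, #(T a) = n)
    (h : #A * Fintype.card β < Fintype.card β ^ n) :
    ∃ ω : ι → β, ∀ a ∈ A, ∀ v, ∃ i ∈ T a, ω i ≠ v := by
  let bad (a : κ) : Finset (ι → β) := {ω | ∃ v, ∀ i ∈ T a, ω i = v}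
  have hcount : #(A.biUnion bad) < #(univ : Finset (ι → β)) := by
    refine Nat.lt_of_mul_lt_mul_right (a := Fintype.card β ^ n) ?_
    calc _ ≤ ∑ a ∈ A, #(bad a) * Fintype.card β ^ n := by
          rw [← sum_mul]; exact Nat.mul_le_mul_right _ card_biUnion_le
      _ ≤ ∑ a ∈ A, Fintype.card β ^ (Fintype.card ι + 1) := by
          refine sum_le_sum fun a ha => ?_
          have := card_mul_pow_le_of_forall_constOn (B := bad a) fun ω hω => (mem_filter.1 hω).2
          rwa [hT a ha] at this
      _ = #A * Fintype.card β * Fintype.card β ^ Fintype.card ι := by simp [pow_succ]; ring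
      _ < Fintype.card β ^ n * Fintype.card β ^ Fintype.card ι :=
          Nat.mul_lt_mul_of_pos_right h (pow_pos Fintype.card_pos _)
      _ = _ := by simp [mul_comm]
  obtain ⟨ω, -, hω⟩ := exists_mem_notMem_of_card_lt_card hcount
  refine ⟨ω, fun a ha v => ?_⟩
  by_contra! hv
  exact hω (mem_biUnion.2 ⟨a, ha, mem_filter.2 ⟨mem_univ _, v, hv⟩⟩)

theorem exists_pair_colouring_of_choose_mul_lt {q N s : ℕ} (hs : 2 ≤ s)
    (h : N.choose s * q < q ^ s.choose 2) :
    ∃ F : Finset ℕ → ℕ, (∀ t, F t < q) ∧ ∀ S ⊆ range N, IsHomogeneous F 2 S → #S < s := by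
  have hq : 0 < q := Nat.pos_of_ne_zero fun hq => by
    subst hq; simp [(Nat.choose_pos hs).ne'] at h
  let P := (range N).powersetCard 2
  have hpairs : ∀ S ∈ (range N).powersetCard s, #((S.powersetCard 2).subtype (· ∈ P)) =
      s.choose 2 := by
    intro S hS
    rw [mem_powersetCard] at hS
    rw [card_subtype, filter_true_of_mem fun p hp => powersetCard_mono hS.1 hp,
      card_powersetCard, hS.2]
  have : Nonempty (Fin q) := ⟨⟨0, hq⟩⟩
  obtain ⟨ω, hω⟩ := exists_forall_exists_ne (β := Fin q) hpairs
    (by rwa [Fintype.card_fin, card_powersetCard, card_range])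
  refine ⟨fun p => if hp : p ∈ P then ω ⟨p, hp⟩ else 0, fun p => ?_, fun S hSN hS => ?_⟩
  · beta_reduce
    split_ifs
    exacts [(ω _).2, hq]
  by_contra! hsS
  obtain ⟨S', hS'S, hS's⟩ := exists_subset_card_eq hsS
  obtain ⟨p₀, hp₀, hp₀2⟩ := exists_subset_card_eq (hs.trans hS's.ge)
  have hp₀P : p₀ ∈ P := mem_powersetCard.2 ⟨hp₀.trans (hS'S.trans hSN), hp₀2⟩
  obtain ⟨p, hp, hpne⟩ := hω S' (mem_powersetCard.2 ⟨hS'S.trans hSN, hS's⟩) (ω ⟨p₀, hp₀P⟩)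
  rw [mem_subtype, mem_powersetCard] at hp
  have := hS p (hp.1.trans hS'S) p₀ (hp₀.trans hS'S) hp.2 hp₀2
  simp only [dif_pos p.2, dif_pos hp₀P] at this
  exact hpne (Fin.ext this)

theorem two_pow_choose_mul_lt {β D : ℕ} (hβ : 0 < β) :
    (2 ^ D).choose (4 * (D / β) + 9) * 2 ^ β < (2 ^ β) ^ (4 * (D / β) + 9).choose 2 := by
  set t := D / β
  have hD : D < β * (t + 1) := Nat.lt_mul_div_succ D hβ
  have hchoose : (4 * t + 9).choose 2 = (4 * t + 9) * (2 * t + 4) := by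
    rw [Nat.choose_two_right, show (4 * t + 9) * (4 * t + 9 - 1) = 2 * ((4 * t + 9) * (2 * t + 4))
      by rw [show 4 * t + 9 - 1 = 2 * (2 * t + 4) by omega]; ring]
    exact Nat.mul_div_cancel_left _ (by norm_num)
  calc _ ≤ (2 ^ D) ^ (4 * t + 9) * 2 ^ β := Nat.mul_le_mul_right _ (Nat.choose_le_pow _ _)
    _ = 2 ^ (D * (4 * t + 9) + β) := by rw [← pow_mul, ← pow_add]
    _ < 2 ^ (β * (4 * t + 9).choose 2) := by
      refine Nat.pow_lt_pow_right (by norm_num) ?_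
      rw [hchoose]
      nlinarith
    _ = _ := pow_mul _ _ _

theorem exists_pair_colouring (β D : ℕ) (hβ : 0 < β) :
    ∃ F : Finset ℕ → ℕ, (∀ t, F t < 2 ^ β) ∧
      ∀ S ⊆ range (2 ^ D), IsHomogeneous F 2 S → #S < 4 * (D / β) + 9 :=
  exists_pair_colouring_of_choose_mul_lt (by omega) (two_pow_choose_mul_lt hβ)

/-- The highest binary digit in which `x` and `y` differ: the `δ(x, y)` of Erdős–Hajnal
stepping up. -/
noncomputable def diffBit (x y : ℕ) : ℕ := sSup {p | x / 2 ^ p ≠ y / 2 ^ p}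

section diffBit

variable {x y z : ℕ}

theorem bddAbove_setOf_div_two_pow_ne (x y : ℕ) : BddAbove {p | x / 2 ^ p ≠ y / 2 ^ p} := by
  refine ⟨x + y, fun p hp => not_lt.1 fun hlt => hp ?_⟩
  have h := (Nat.lt_two_pow_self (n := p))
  rw [Nat.div_eq_of_lt (by omega), Nat.div_eq_of_lt (by omega)]

theorem div_two_pow_diffBit_ne (h : x ≠ y) : x / 2 ^ diffBit x y ≠ y / 2 ^ diffBit x y :=
  Nat.sSup_mem ⟨0, by simpa using h⟩ (bddAbove_setOf_div_two_pow_ne x y)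

theorem div_two_pow_eq_of_diffBit_lt {p : ℕ} (h : diffBit x y < p) : x / 2 ^ p = y / 2 ^ p :=
  not_not.1 fun hp => h.not_ge (le_csSup (bddAbove_setOf_div_two_pow_ne x y) hp)

theorem div_two_pow_diffBit_lt (h : x < y) : x / 2 ^ diffBit x y < y / 2 ^ diffBit x y :=
  (Nat.div_le_div_right h.le).lt_of_ne (div_two_pow_diffBit_ne h.ne)

theorem diffBit_lt_of_lt_two_pow {M : ℕ} (h : x ≠ y) (hx : x < 2 ^ M) (hy : y < 2 ^ M) :
    diffBit x y < M := by
  refine not_le.1 fun hM => div_two_pow_diffBit_ne h ?_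
  have := Nat.pow_le_pow_right (n := 2) (by norm_num) hM
  rw [Nat.div_eq_of_lt (by omega), Nat.div_eq_of_lt (by omega)]

theorem diffBit_ne (hxy : x < y) (hyz : y < z) : diffBit x y ≠ diffBit y z := by
  intro h
  have h₁ := div_two_pow_eq_of_diffBit_lt (lt_add_one (diffBit x y))
  have h₂ : y / 2 ^ (diffBit x y + 1) = z / 2 ^ (diffBit x y + 1) :=
    div_two_pow_eq_of_diffBit_lt (by omega)
  have h₃ := div_two_pow_diffBit_lt hxy
  have h₄ := div_two_pow_diffBit_lt hyz
  rw [← h] at h₄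
  rw [pow_succ, ← Nat.div_div_eq_div_mul, ← Nat.div_div_eq_div_mul] at h₁ h₂
  generalize 2 ^ diffBit x y = P at *
  omega

theorem diffBit_eq_max (hxy : x < y) (hyz : y < z) :
    diffBit x z = max (diffBit x y) (diffBit y z) := by
  have hxz : x / 2 ^ max (diffBit x y) (diffBit y z) ≠ z / 2 ^ max (diffBit x y) (diffBit y z) := by
    intro h
    have hxy' := Nat.div_le_div_right (c := 2 ^ max (diffBit x y) (diffBit y z)) hxy.le
    have hyz' := Nat.div_le_div_right (c := 2 ^ max (diffBit x y) (diffBit y z)) hyz.le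
    rcases max_choice (diffBit x y) (diffBit y z) with hp | hp <;> rw [hp] at h hxy' hyz'
    · exact div_two_pow_diffBit_ne hxy.ne (by omega)
    · exact div_two_pow_diffBit_ne hyz.ne (by omega)
  refine le_antisymm (not_lt.1 fun hlt => ?_) (le_csSup (bddAbove_setOf_div_two_pow_ne x z) hxz)
  exact div_two_pow_diffBit_ne (hxy.trans hyz).ne (by
    rw [div_two_pow_eq_of_diffBit_lt ((le_max_left _ _).trans_lt hlt),
      div_two_pow_eq_of_diffBit_lt ((le_max_right _ _).trans_lt hlt)])

end diffBit

noncomputable def diffBitSucc (u : ℕ → ℕ) (i : ℕ) : ℕ := diffBit (u i) (u (i + 1))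

noncomputable def diffBits (t : Finset ℕ) : Finset ℕ :=
  (t ×ˢ t).filter (fun p => p.1 < p.2) |>.image fun p => diffBit p.1 p.2

section Enumeration

variable {u : ℕ → ℕ} {n : ℕ}

theorem diffBit_eq_of_monotoneOn (hu : StrictMonoOn u (Set.Iic (n + 1)))
    (hδ : MonotoneOn (diffBitSucc u) (Set.Iic n)) {i j : ℕ} (hij : i < j) (hjn : j ≤ n + 1) :
    diffBit (u i) (u j) = diffBitSucc u (j - 1) := by
  induction j, hij using Nat.le_induction with
  | base => rfl
  | succ j hij ih =>
    rw [diffBit_eq_max (y := u j) (hu (by simp; omega) (by simp; omega) (by omega))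
      (hu (by simp; omega) (by simpa using hjn) (by omega)), ih (by omega), add_tsub_cancel_right]
    exact max_eq_right (hδ (by simp; omega) (by simp; omega) (by omega))

theorem diffBit_eq_of_antitoneOn (hu : StrictMonoOn u (Set.Iic (n + 1)))
    (hδ : AntitoneOn (diffBitSucc u) (Set.Iic n)) {i j : ℕ} (hij : i < j) (hjn : j ≤ n + 1) :
    diffBit (u i) (u j) = diffBitSucc u i := by
  induction j, hij using Nat.le_induction with
  | base => rfl
  | succ j hij ih =>
    rw [diffBit_eq_max (y := u j) (hu (by simp; omega) (by simp; omega) (by omega))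
      (hu (by simp; omega) (by simpa using hjn) (by omega)), ih (by omega)]
    exact max_eq_left (hδ (by simp; omega) (by simp; omega) (by omega))

theorem mem_diffBits_image (hu : StrictMonoOn u (Set.Iic n)) {G : Finset ℕ}
    (hG : ∀ i ∈ G, i ≤ n) {y : ℕ} :
    y ∈ diffBits (G.image u) ↔ ∃ i ∈ G, ∃ j ∈ G, i < j ∧ diffBit (u i) (u j) = y := by
  simp only [diffBits, mem_image, mem_filter, mem_product, Prod.exists]
  constructor
  · rintro ⟨-, -, ⟨⟨⟨i, hi, rfl⟩, ⟨j, hj, rfl⟩⟩, hlt⟩, rfl⟩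
    exact ⟨i, hi, j, hj, (hu.lt_iff_lt (hG i hi) (hG j hj)).1 hlt, rfl⟩
  · rintro ⟨i, hi, j, hj, hij, rfl⟩
    exact ⟨u i, u j, ⟨⟨⟨i, hi, rfl⟩, ⟨j, hj, rfl⟩⟩, hu (hG i hi) (hG j hj) hij⟩, rfl⟩

theorem exists_diffBits_image_eq_of_monotoneOn (hu : StrictMonoOn u (Set.Iic (n + 1)))
    (hδ : MonotoneOn (diffBitSucc u) (Set.Iic n)) {J : Finset ℕ} (hJ : J ⊆ range (n + 1))
    (hJne : J.Nonempty) :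
    ∃ G ⊆ range (n + 2), #G = #J + 1 ∧ diffBits (G.image u) = J.image (diffBitSucc u) := by
  set j₀ := J.min' hJne
  have hJn (j) (hj : j ∈ J) : j ≤ n := Nat.lt_succ_iff.1 (mem_range.1 (hJ hj))
  have hG (i) (hi : i ∈ insert j₀ (J.image (· + 1))) : j₀ ≤ i ∧ i ≤ n + 1 := by
    simp only [mem_insert, mem_image] at hi
    rcases hi with rfl | ⟨j, hj, rfl⟩
    · exact ⟨le_rfl, (hJn _ (J.min'_mem hJne)).trans (Nat.le_succ n)⟩
    · exact ⟨(J.min'_le j hj).trans (Nat.le_succ j), by have := hJn j hj; omega⟩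
  refine ⟨insert j₀ (J.image (· + 1)), fun i hi => mem_range.2 (Nat.lt_succ_of_le (hG i hi).2),
    ?_, ?_⟩
  · rw [card_insert_of_notMem fun h => ?_, card_image_of_injective _ (add_left_injective 1)]
    obtain ⟨j, hj, hj₀⟩ := mem_image.1 h
    exact (J.min'_le j hj).not_gt (by omega)
  ext y
  rw [mem_diffBits_image hu fun i hi => (hG i hi).2, mem_image]
  constructor
  · rintro ⟨i, hi, j, hj, hij, rfl⟩
    rcases mem_insert.1 hj with rfl | hj
    · exact absurd (hG i hi).1 (not_le.2 hij)
    obtain ⟨j', hj', rfl⟩ := mem_image.1 hj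
    exact ⟨j', hj', (diffBit_eq_of_monotoneOn hu hδ hij (by have := hJn j' hj'; omega)).symm⟩
  · rintro ⟨j, hj, rfl⟩
    refine ⟨j₀, mem_insert_self _ _, j + 1, mem_insert_of_mem (mem_image_of_mem _ hj),
      Nat.lt_succ_of_le (J.min'_le j hj), ?_⟩
    exact diffBit_eq_of_monotoneOn hu hδ (Nat.lt_succ_of_le (J.min'_le j hj))
      (by have := hJn j hj; omega)

theorem exists_diffBits_image_eq_of_antitoneOn (hu : StrictMonoOn u (Set.Iic (n + 1)))
    (hδ : AntitoneOn (diffBitSucc u) (Set.Iic n)) {J : Finset ℕ} (hJ : J ⊆ range (n + 1))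
    (hJne : J.Nonempty) :
    ∃ G ⊆ range (n + 2), #G = #J + 1 ∧ diffBits (G.image u) = J.image (diffBitSucc u) := by
  set j₁ := J.max' hJne + 1
  have hJn (j) (hj : j ∈ J) : j ≤ n := Nat.lt_succ_iff.1 (mem_range.1 (hJ hj))
  have hG (i) (hi : i ∈ insert j₁ J) : i ≤ j₁ ∧ i ≤ n + 1 := by
    rcases mem_insert.1 hi with rfl | hi
    · exact ⟨le_rfl, by have := hJn _ (J.max'_mem hJne); omega⟩
    · exact ⟨(J.le_max' i hi).trans (Nat.le_succ _), by have := hJn i hi; omega⟩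
  refine ⟨insert j₁ J, fun i hi => mem_range.2 (Nat.lt_succ_of_le (hG i hi).2), ?_, ?_⟩
  · exact card_insert_of_notMem fun h => (J.le_max' _ h).not_gt (Nat.lt_succ_self _)
  ext y
  rw [mem_diffBits_image hu fun i hi => (hG i hi).2, mem_image]
  constructor
  · rintro ⟨i, hi, j, hj, hij, rfl⟩
    rcases mem_insert.1 hi with rfl | hi
    · exact absurd (hG j hj).1 (not_le.2 hij)
    exact ⟨i, hi, (diffBit_eq_of_antitoneOn hu hδ hij (hG j hj).2).symm⟩
  · rintro ⟨j, hj, rfl⟩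
    have hjj₁ : j < j₁ := Nat.lt_succ_of_le (J.le_max' j hj)
    exact ⟨j, mem_insert_of_mem hj, j₁, mem_insert_self _ _, hjj₁,
      diffBit_eq_of_antitoneOn hu hδ hjj₁ (by have := hJn _ (J.max'_mem hJne); omega)⟩

end Enumeration

noncomputable def stepUpBit (t : Finset ℕ) : ℕ :=
  match t.sort with
  | x :: y :: z :: _ => if diffBit x y < diffBit y z then 1 else 0
  | _ => 0

theorem stepUpBit_lt_two (t : Finset ℕ) : stepUpBit t < 2 := by
  unfold stepUpBit; split <;> [split_ifs <;> omega; omega]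

theorem stepUpBit_insert {x y z : ℕ} {t : Finset ℕ} (hxy : x < y) (hyz : y < z)
    (hz : ∀ w ∈ t, z < w) :
    stepUpBit (insert x (insert y (insert z t))) =
      if diffBit x y < diffBit y z then 1 else 0 := by
  have hz' : ∀ w ∈ insert z t, y < w := by
    simpa [hyz] using fun w hw => hyz.trans (hz w hw)
  have hy' : ∀ w ∈ insert y (insert z t), x < w := by
    simpa [hxy] using fun w hw => hxy.trans (hz' w hw)
  rw [stepUpBit, sort_insert _ (fun w hw => (hy' w hw).le) fun h => (hy' x h).false,
    sort_insert _ (fun w hw => (hz' w hw).le) fun h => (hz' y h).false,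
    sort_insert _ (fun w hw => (hz w hw).le) fun h => (hz z h).false]

theorem strictMonoOn_or_strictAntiOn_Iic {f : ℕ → ℕ} {s : ℕ} (hne : ∀ i < s, f i ≠ f (i + 1))
    (hdir : ∀ i < s, (f i < f (i + 1) ↔ f 0 < f 1)) :
    StrictMonoOn f (Set.Iic s) ∨ StrictAntiOn f (Set.Iic s) := by
  by_cases h : f 0 < f 1
  · exact .inl (strictMonoOn_Iic_of_lt_succ fun i hi => (hdir i hi).2 h)
  · exact .inr (strictAntiOn_Iic_of_succ_lt fun i hi =>
      lt_of_le_of_ne (not_lt.1 fun h' => h ((hdir i hi).1 h')) (hne i hi).symm)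

theorem Finset.exists_strictMonoOn_mem (S : Finset ℕ) :
    ∃ u : ℕ → ℕ, StrictMonoOn u (Set.Iio #S) ∧ ∀ i < #S, u i ∈ S := by
  have hf : (Set.ofPred (· ∈ S)).Finite := S.finite_toSet
  have hcard : #hf.toFinset = #S := by congr 1; ext; simp [Set.ofPred]
  exact ⟨Nat.nth (· ∈ S), hcard ▸ Nat.nth_strictMonoOn hf,
    fun i hi => Nat.nth_mem_of_lt_card hf (hcard ▸ hi)⟩

theorem exists_stepUpBit_image_eq {u : ℕ → ℕ} {N k i : ℕ} (hu : StrictMonoOn u (Set.Iio N))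
    (hk : 2 ≤ k) (hi : i + k < N) :
    ∃ G ⊆ range N, #G = k + 1 ∧
      stepUpBit (G.image u) = if diffBitSucc u i < diffBitSucc u (i + 1) then 1 else 0 := by
  have hlt {a b : ℕ} (hab : a < b) (hb : b < N) : u a < u b := hu (hab.trans hb) hb hab
  refine ⟨insert i (insert (i + 1) (insert (i + 2) (Ico (N + 2 - k) N))), ?_, ?_, ?_⟩
  · intro j hj; simp only [mem_insert, mem_Ico] at hj; simp only [mem_range]; omega
  · rw [card_insert_of_notMem (by simp; omega), card_insert_of_notMem (by simp; omega),
      card_insert_of_notMem (by simp; omega), Nat.card_Ico]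
    omega
  · rw [image_insert, image_insert, image_insert]
    refine stepUpBit_insert (hlt (by omega) (by omega)) (hlt (by omega) (by omega)) ?_
    simp only [mem_image, mem_Ico]
    rintro _ ⟨j, hj, rfl⟩
    exact hlt (by omega) hj.2

noncomputable def stepUp (F : Finset ℕ → ℕ) (t : Finset ℕ) : ℕ :=
  stepUpBit t + 2 * F (diffBits t)

theorem stepUp_lt {F : Finset ℕ → ℕ} {q : ℕ} (hF : ∀ t, F t < q) (t : Finset ℕ) :
    stepUp F t < 2 * q := by
  have := stepUpBit_lt_two t; have := hF (diffBits t); unfold stepUp; omega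

section StepUp

variable {u : ℕ → ℕ} {N : ℕ} {S : Finset ℕ}

theorem image_subset_of_subset_range (huS : ∀ i < N, u i ∈ S) {G : Finset ℕ}
    (hG : G ⊆ range N) : G.image u ⊆ S :=
  image_subset_iff.2 fun i hi => huS i (mem_range.1 (hG hi))

theorem StrictMonoOn.card_image_of_subset_range (hu : StrictMonoOn u (Set.Iio N))
    {G : Finset ℕ} (hG : G ⊆ range N) : #(G.image u) = #G :=
  card_image_of_injOn (hu.injOn.mono fun _ hi => mem_range.1 (hG hi))

theorem strictMonoOn_or_strictAntiOn_diffBitSucc (hu : StrictMonoOn u (Set.Iio N))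
    (huS : ∀ i < N, u i ∈ S) {k s : ℕ} (hk : 2 ≤ k) (hsN : s + k ≤ N)
    (hbit : IsHomogeneous stepUpBit (k + 1) S) :
    StrictMonoOn (diffBitSucc u) (Set.Iic s) ∨ StrictAntiOn (diffBitSucc u) (Set.Iic s) := by
  have hlt {a b : ℕ} (hab : a < b) (hb : b < N) : u a < u b := hu (hab.trans hb) hb hab
  refine strictMonoOn_or_strictAntiOn_Iic
    (fun i hi => diffBit_ne (hlt (by omega) (by omega)) (hlt (by omega) (by omega)))
    fun i hi => ?_
  obtain ⟨G, hG, hGk, hGbit⟩ := exists_stepUpBit_image_eq hu hk (by omega : i + k < N)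
  obtain ⟨G₀, hG₀, hG₀k, hG₀bit⟩ := exists_stepUpBit_image_eq hu hk (by omega : 0 + k < N)
  have := hbit _ (image_subset_of_subset_range huS hG) _ (image_subset_of_subset_range huS hG₀)
    (by rw [hu.card_image_of_subset_range hG, hGk])
    (by rw [hu.card_image_of_subset_range hG₀, hG₀k])
  rw [hGbit, hG₀bit] at this
  split_ifs at this with h₁ h₀ h₀
  exacts [iff_of_true h₁ h₀, iff_of_false h₁ h₀]

theorem isHomogeneous_image_diffBitSucc (hu : StrictMonoOn u (Set.Iio N))
    (huS : ∀ i < N, u i ∈ S) {F : Finset ℕ → ℕ} {k s : ℕ} (hsN : s + 2 ≤ N)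
    (hδ : StrictMonoOn (diffBitSucc u) (Set.Iic s) ∨ StrictAntiOn (diffBitSucc u) (Set.Iic s))
    (hinj : Set.InjOn (diffBitSucc u) (range (s + 1))) (hk : 1 ≤ k)
    (hF : IsHomogeneous (fun X => F (diffBits X)) (k + 1) S) :
    IsHomogeneous F k ((range (s + 1)).image (diffBitSucc u)) := by
  have hu' : StrictMonoOn u (Set.Iic (s + 1)) := hu.mono fun i hi => by simp at hi ⊢; omega
  refine hF.of_forall_exists_eq fun t ht htk => ?_
  obtain ⟨J, hJ, rfl⟩ := subset_image_iff.1 ht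
  have hJk : #J = k := by rwa [card_image_of_injOn (hinj.mono hJ)] at htk
  have hJne : J.Nonempty := card_pos.1 (by omega)
  obtain ⟨G, hG, hGJ, hGeq⟩ := hδ.elim
    (fun h => exists_diffBits_image_eq_of_monotoneOn hu' h.monotoneOn hJ hJne)
    (fun h => exists_diffBits_image_eq_of_antitoneOn hu' h.antitoneOn hJ hJne)
  have hG' : G ⊆ range N := hG.trans (range_subset_range.2 hsN)
  exact ⟨G.image u, image_subset_of_subset_range huS hG',
    by rw [hu.card_image_of_subset_range hG', hGJ, hJk], hGeq⟩

end StepUp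

/-- Homogeneity of `stepUpBit` makes `diffBitSucc u` monotone along the enumeration `u` of `S`,
and then its first `s + 1` values form a homogeneous set for `F`. -/
theorem card_lt_of_isHomogeneous_stepUp {F : Finset ℕ → ℕ} {k M s : ℕ} (hk : 2 ≤ k)
    (hF : ∀ S ⊆ range M, IsHomogeneous F k S → #S < s) {S : Finset ℕ}
    (hS : S ⊆ range (2 ^ M)) (hhom : IsHomogeneous (stepUp F) (k + 1) S) : #S < s + k := by
  by_contra! hsk
  obtain ⟨u, hu, huS⟩ := S.exists_strictMonoOn_mem
  obtain ⟨hbit, hdiff⟩ := hhom.of_add_mul fun t _ _ => stepUpBit_lt_two t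
  have hδ := strictMonoOn_or_strictAntiOn_diffBitSucc (s := s) hu huS hk hsk hbit
  have hinj : Set.InjOn (diffBitSucc u) (range (s + 1)) :=
    (hδ.elim StrictMonoOn.injOn StrictAntiOn.injOn).mono fun i hi => by simp at hi ⊢; omega
  have hVM : (range (s + 1)).image (diffBitSucc u) ⊆ range M := by
    refine image_subset_iff.2 fun i hi => mem_range.2 ?_
    have hi : i + 1 < #S := by simp at hi; omega
    exact diffBit_lt_of_lt_two_pow (hu (by simp; omega) hi (lt_add_one i)).ne
      (mem_range.1 (hS (huS i (by omega)))) (mem_range.1 (hS (huS (i + 1) hi)))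
  have := hF _ hVM (isHomogeneous_image_diffBitSucc hu huS (by omega) hδ hinj (by omega) hdiff)
  rw [card_image_of_injOn hinj, card_range] at this
  omega

theorem exists_colouring_tower (β D : ℕ) (hβ : 0 < β) {d : ℕ} (hd : 1 ≤ d) :
    ∃ F : Finset ℕ → ℕ, (∀ t, F t < 2 ^ (β + d - 1)) ∧
      ∀ S ⊆ range (tower d D), IsHomogeneous F (d + 1) S → #S < 4 * (D / β) + 9 + d * d := by
  induction d, hd using Nat.le_induction with
  | base =>
    obtain ⟨F, hFq, hF⟩ := exists_pair_colouring β D hβ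
    exact ⟨F, hFq, fun S hS hhom => (hF S hS hhom).trans (by omega)⟩
  | succ d hd ih =>
    obtain ⟨F, hFq, hF⟩ := ih
    refine ⟨stepUp F, fun t => ?_, fun S hS hhom => ?_⟩
    · rw [show β + (d + 1) - 1 = β + d - 1 + 1 by omega, pow_succ, mul_comm]
      exact stepUp_lt hFq t
    · exact (card_lt_of_isHomogeneous_stepUp (by omega) hF hS hhom).trans_le (by nlinarith)

/-! ### Compression by the inverse tower -/

theorem tower_strictMono (d : ℕ) : StrictMono (tower d) := by
  induction d with
  | zero => exact strictMono_id
  | succ d ih => exact fun a b h => Nat.pow_lt_pow_right (by norm_num) (ih h)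

/-- `f(i) = max {j | 2_d(j c) ≤ i}`; `sSup ∅ = 0` matches the convention `f(i) = 0` when no `j`
qualifies. -/
noncomputable def invTower (d c i : ℕ) : ℕ := sSup {j | tower d (j * c) ≤ i}

section invTower

variable {d c i j : ℕ}

theorem mem_upperBounds_setOf_tower_mul_le (hc : 1 ≤ c) :
    i ∈ upperBounds {j | tower d (j * c) ≤ i} :=
  fun j hj => (Nat.le_mul_of_pos_right j hc).trans (((tower_strictMono d).id_le _).trans hj)

theorem le_invTower (hc : 1 ≤ c) (h : tower d (j * c) ≤ i) : j ≤ invTower d c i :=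
  le_csSup ⟨i, mem_upperBounds_setOf_tower_mul_le hc⟩ h

theorem invTower_le_self (hc : 1 ≤ c) : invTower d c i ≤ i :=
  csSup_le' (mem_upperBounds_setOf_tower_mul_le hc)

theorem lt_tower_of_invTower_lt (hc : 1 ≤ c) (h : invTower d c i < j) : i < tower d (j * c) :=
  not_le.1 fun h' => h.not_ge (le_invTower hc h')

end invTower

theorem four_mul_div_add_le {d c w : ℕ} (hw : d * d + 3 ≤ w) :
    4 * ((2 ^ (d + 4) * w + 2 ^ (d + 4)) * c / ((c + 2) * 2 ^ (d + 3))) + 9 + d * d ≤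
      2 ^ (d + 4) * w := by
  have ha : 2 ^ (d + 4) = 2 * 2 ^ (d + 3) := by ring
  have h16 : 16 ≤ 2 ^ (d + 4) := by
    calc 16 = 2 ^ 4 := by norm_num
      _ ≤ 2 ^ (d + 4) := Nat.pow_le_pow_right (by norm_num) (by omega)
  have hdiv : (2 ^ (d + 4) * w + 2 ^ (d + 4)) * c / ((c + 2) * 2 ^ (d + 3)) ≤ 2 * (w + 1) :=
    Nat.div_le_of_le_mul (by rw [ha]; nlinarith)
  nlinarith

theorem invTower_div_mem_Icc {d c m R x : ℕ} {a : ℕ} (hc : 1 ≤ c) (ha : 0 < a)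
    (hx : x ∈ Icc (tower d (a * c * m)) R) : invTower d c x / a ∈ Icc m R := by
  obtain ⟨hmx, hxR⟩ := mem_Icc.1 hx
  refine mem_Icc.2 ⟨(Nat.le_div_iff_mul_le ha).2 ?_,
    (Nat.div_le_self _ _).trans ((invTower_le_self hc).trans hxR)⟩
  exact mul_comm m a ▸ le_invTower hc (by rwa [mul_right_comm])

theorem lt_tower_of_invTower_div_eq {d c x a w : ℕ} (hc : 1 ≤ c) (ha : 0 < a)
    (h : invTower d c x / a = w) : x < tower d ((a * w + a) * c) := by
  refine lt_tower_of_invTower_lt hc ?_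
  have := Nat.lt_mul_div_succ (invTower d c x) ha
  rwa [h, mul_add_one] at this

/-- Mixed-radix code of the number of values of `ψ` on `s`, the colour `C (ψ s)` (used when `ψ`
is injective on `s`) and the colour of `s` in the colouring `Φ w` of the fibre `w = max ψ(s)`. -/
noncomputable def liftColouring (d r : ℕ) (ψ : ℕ → ℕ) (C : Finset ℕ → ℕ)
    (Φ : ℕ → Finset ℕ → ℕ) (s : Finset ℕ) : ℕ :=
  #(s.image ψ) + (d + 2) * ((if #(s.image ψ) = d + 1 then C (s.image ψ) else 0) + r * Φ (s.sup ψ) s)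

section liftColouring

variable {d r q : ℕ} {ψ : ℕ → ℕ} {C : Finset ℕ → ℕ} {Φ : ℕ → Finset ℕ → ℕ} {X : Finset ℕ}

theorem liftColouring_lt (hr : 0 < r) (hC : ∀ s ⊆ X, #(s.image ψ) = d + 1 → C (s.image ψ) < r)
    (hΦ : ∀ w t, Φ w t < q) : ∀ s ⊆ X, #s = d + 1 → liftColouring d r ψ C Φ s < (d + 2) * (r * q) :=
  fun s hs hsk => Nat.add_mul_lt_mul_of_lt_of_lt (card_image_le.trans_lt (by omega))
    (Nat.add_mul_lt_mul_of_lt_of_lt (by split_ifs with h; exacts [hC s hs h, hr]) (hΦ _ s))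

theorem IsHomogeneous.of_liftColouring (hd : 1 ≤ d) (hr : 0 < r) (hX : d * d < #X)
    (hC : ∀ s ⊆ X, #(s.image ψ) = d + 1 → C (s.image ψ) < r)
    (h : IsHomogeneous (liftColouring d r ψ C Φ) (d + 1) X) :
    (Set.InjOn ψ X ∧ IsHomogeneous C (d + 1) (X.image ψ)) ∨
      ∃ w, (∀ x ∈ X, ψ x = w) ∧ IsHomogeneous (Φ w) (d + 1) X := by
  obtain ⟨hcard, hrest⟩ := h.of_add_mul fun s _ hsk => card_image_le.trans_lt (by omega)
  obtain ⟨hC', hΦ'⟩ := hrest.of_add_mul fun s hs _ => by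
    split_ifs with h; exacts [hC s hs h, hr]
  rcases injOn_or_forall_eq_of_isHomogeneous_card_image hd hX hcard with hinj | hconst
  · refine .inl ⟨hinj, (hC'.congr fun s hs hsk => if_pos ?_).image hinj⟩
    rw [card_image_of_injOn (hinj.mono hs), hsk]
  obtain ⟨x₀, hx₀⟩ := card_pos.1 (hX.trans_le' (Nat.zero_le _))
  refine .inr ⟨ψ x₀, fun x hx => hconst x hx x₀ hx₀, hΦ'.congr fun s hs hsk => ?_⟩
  obtain ⟨y, hy⟩ := card_pos.1 (show 0 < #s by omega)
  have hsup : s.sup ψ = ψ x₀ := le_antisymm (Finset.sup_le fun x hx => (hconst x (hs hx) _ hx₀).le)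
    ((hconst y (hs hy) _ hx₀).symm.le.trans (le_sup hy))
  simp only [hsup]

end liftColouring

theorem add_two_mul_mul_two_pow_le (d c r : ℕ) :
    (d + 2) * (r * 2 ^ ((c + 2) * 2 ^ (d + 3) + d - 1)) ≤
      r * (d + 2) ^ 2 * 2 ^ ((c + 2) * 2 ^ (d + 4)) := by
  have hd : d < (c + 2) * 2 ^ (d + 3) := Nat.lt_two_pow_self.trans_le
    ((Nat.pow_le_pow_right (by norm_num) (by omega)).trans (Nat.le_mul_of_pos_left _ (by omega)))
  have hexp : (c + 2) * 2 ^ (d + 3) + d - 1 ≤ (c + 2) * 2 ^ (d + 4) := by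
    rw [pow_succ _ (d + 3), ← mul_assoc]; omega
  calc _ ≤ (d + 2) * (d + 2) * (r * 2 ^ ((c + 2) * 2 ^ (d + 4))) :=
        Nat.mul_le_mul (Nat.le_mul_of_pos_right _ (by omega))
          (Nat.mul_le_mul_left r (Nat.pow_le_pow_right (by norm_num) hexp))
    _ = _ := by ring

theorem PHProp_id_of_PHProp_invTower {d c m r R : ℕ} (hd : 1 ≤ d) (hc : 1 ≤ c)
    (hm : d * d + 3 ≤ m) (hr : 0 < r)
    (hR : PHProp (invTower d c) (d + 1) (tower d (2 ^ (d + 4) * c * m))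
      (r * (d + 2) ^ 2 * 2 ^ ((c + 2) * 2 ^ (d + 4))) R) :
    PHProp id (d + 1) m r R := by
  choose Φ hΦ_lt hΦ using fun w =>
    exists_colouring_tower ((c + 2) * 2 ^ (d + 3)) ((2 ^ (d + 4) * w + 2 ^ (d + 4)) * c)
      (by positivity) hd
  set ψ : ℕ → ℕ := fun x => invTower d c x / 2 ^ (d + 4)
  have hψ : ∀ s ⊆ Icc (tower d (2 ^ (d + 4) * c * m)) R, s.image ψ ⊆ Icc m R := fun s hs =>
    image_subset_iff.2 fun x hx => invTower_div_mem_Icc hc (by positivity) (hs hx)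
  intro C hC
  obtain ⟨H, hHR, hHne, hHlarge, hH⟩ := hR (liftColouring d r ψ C Φ) fun s hs hsk =>
    (liftColouring_lt hr (fun s hs h => hC _ (hψ s hs) h) hΦ_lt s hs hsk).trans_le
      (add_two_mul_mul_two_pow_le d c r)
  have hx₀ : sInf (H : Set ℕ) ∈ H := by exact_mod_cast Nat.sInf_mem (coe_nonempty.2 hHne)
  have hx₀m : m ≤ ψ (sInf (H : Set ℕ)) :=
    (mem_Icc.1 (invTower_div_mem_Icc hc (by positivity) (hHR hx₀))).1
  have hψx₀ : 2 ^ (d + 4) * ψ (sInf (H : Set ℕ)) ≤ #H := (Nat.mul_div_le _ _).trans hHlarge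
  have hHd : d * d < #H := by nlinarith [Nat.one_le_two_pow (n := d + 4)]
  rcases IsHomogeneous.of_liftColouring hd hr hHd (fun s hs h => hC _ (hψ s (hs.trans hHR)) h) hH
    with ⟨hinj, hCH⟩ | ⟨w, hw, hΦH⟩
  · refine ⟨H.image ψ, hψ H hHR, hHne.image ψ, ?_, hCH⟩
    calc id (sInf (↑(H.image ψ) : Set ℕ)) ≤ ψ (sInf (H : Set ℕ)) :=
          Nat.sInf_le (by exact_mod_cast mem_image_of_mem ψ hx₀)
      _ ≤ invTower d c (sInf (H : Set ℕ)) := Nat.div_le_self _ _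
      _ ≤ #H := hHlarge
      _ = #(H.image ψ) := (card_image_of_injOn hinj).symm
  · have hHw : H ⊆ range (tower d ((2 ^ (d + 4) * w + 2 ^ (d + 4)) * c)) := fun x hx =>
      mem_range.2 (lt_tower_of_invTower_div_eq hc (by positivity) (hw x hx))
    have := hΦ w H hHw hΦH
    rw [hw _ hx₀] at hψx₀ hx₀m
    have := four_mul_div_add_le (c := c) (hm.trans hx₀m)
    omega

/-- Lower bound for the parametrised Paris–Harrington function:
`PH^{d+1}_{(log^d)/c}(2_d(a·c·m), r·(d+2)²·2^{(c+2)·a}) ≥ PH^{d+1}_id(m,r)`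
for sufficiently large `m`. -/
theorem PH_parametrised_lower_bound (d : ℕ) (hd : 1 ≤ d) :
    ∃ a, 1 ≤ a ∧ ∀ c, 1 ≤ c → ∃ N, ∀ m, N ≤ m → ∀ r, 2 ≤ r →
      PHnum id (d+1) m r ≤
        PHnum (fun i => sSup {j | tower d (j*c) ≤ i}) (d+1)
          (tower d (a*c*m)) (r * (d+2)^2 * 2^((c+2)*a)) := by
  refine ⟨2 ^ (d + 4), Nat.one_le_two_pow, fun c hc => ⟨d * d + 3, fun m hm r hr => ?_⟩⟩
  exact PHnum_le_PHnum (exists_PHProp _ _ _ _) fun R hR =>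
    PHProp_id_of_PHProp_invTower hd hc hm (by omega) hR
end
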